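/- arXiv:1312.0569 — 5 statements merged into one kernel-verified Lean document; each statement's English description precedes it below -/
import Mathlib

section
/- (Lemma 4.1) Let G(y) be a q×p matrix of real polynomial functions (q ≤ p) of full row rank, with ᾱ = ᾱ(G). Suppose there exist nonnegative integers α = (α_1,…,α_q) and a nonsingular real q×q matrix S such that for every y ∈ ℝ^p the limit Ḡ(y) = lim_{λ→∞} diag(λ^{α_1},…,λ^{α_q}) · S · G(y/λ) exists and Ḡ is a nonzero matrix of polynomials. Then Σ_{i=1}^{q} α_i ≤ ᾱ, and Ḡ(y) has full row rank q (as a matrix of polynomials) if and only if Σ_{i=1}^{q} α_i = ᾱ. -/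
open MvPolynomial Matrix Filter Topology

/-- The lower degree of a polynomial (in `ℕ∞`, with the zero polynomial getting `⊤`). -/
noncomputable def lowDeg {p : ℕ} (h : MvPolynomial (Fin p) ℝ) : ℕ∞ :=
  sInf {k : ℕ∞ | ∃ n : ℕ, k = n ∧ MvPolynomial.homogeneousComponent n h ≠ 0}

/-- `ᾱ(G)`: the minimum over all `q×q` submatrices of `G` of the lower degree of the
determinant (with the convention `+∞` for a zero determinant). -/
noncomputable def alphaBar {q p : ℕ} (G : Matrix (Fin q) (Fin p) (MvPolynomial (Fin p) ℝ)) : ℕ∞ :=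
  ⨅ e : Fin q ↪ Fin p, lowDeg (Matrix.det (G.submatrix id e))

/-- The product `S · G` of a real matrix `S` with a matrix of polynomials `G`. -/
noncomputable def smulMat {q p : ℕ} (S : Matrix (Fin q) (Fin q) ℝ)
    (G : Matrix (Fin q) (Fin p) (MvPolynomial (Fin p) ℝ)) :
    Matrix (Fin q) (Fin p) (MvPolynomial (Fin p) ℝ) :=
  fun i j => ∑ k, MvPolynomial.C (S i k) * G k j

/-- A `q×p` matrix of polynomials has full row rank if some `q×q` submatrix has a
determinant that is a nonzero polynomial. -/
def fullRowRank {q p : ℕ} (G : Matrix (Fin q) (Fin p) (MvPolynomial (Fin p) ℝ)) : Prop :=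
  ∃ e : Fin q ↪ Fin p, Matrix.det (G.submatrix id e) ≠ 0

/-- The limit matrix `Ḡ`: row `i` consists of the degree-`α_i` homogeneous components
of the entries of row `i` of `S·G`. -/
noncomputable def gbarMat {q p : ℕ} (S : Matrix (Fin q) (Fin q) ℝ)
    (G : Matrix (Fin q) (Fin p) (MvPolynomial (Fin p) ℝ)) (α : Fin q → ℕ) :
    Matrix (Fin q) (Fin p) (MvPolynomial (Fin p) ℝ) :=
  Matrix.of fun i j => MvPolynomial.homogeneousComponent (α i) (smulMat S G i j)


namespace StmtAux

variable {p : ℕ}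

lemma hc_mul (f g : MvPolynomial (Fin p) ℝ) (n : ℕ) :
    homogeneousComponent n (f * g) =
      ∑ ij ∈ Finset.HasAntidiagonal.antidiagonal n,
        homogeneousComponent ij.1 f * homogeneousComponent ij.2 g := by
  have key : homogeneousComponent n (f * g)
      = ∑ ij ∈ (Finset.range (f.totalDegree + 1) ×ˢ Finset.range (g.totalDegree + 1)).filter
          (fun ij => ij.1 + ij.2 = n),
          homogeneousComponent ij.1 f * homogeneousComponent ij.2 g := by
    conv_lhs => rw [← sum_homogeneousComponent f, ← sum_homogeneousComponent g]
    rw [Finset.sum_mul_sum, ← Finset.sum_product', map_sum, Finset.sum_filter]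
    refine Finset.sum_congr rfl fun ij _ => ?_
    have hmem : homogeneousComponent ij.1 f * homogeneousComponent ij.2 g ∈
        homogeneousSubmodule (Fin p) ℝ (ij.1 + ij.2) := by
      rw [mem_homogeneousSubmodule]
      exact (homogeneousComponent_isHomogeneous ij.1 f).mul
        (homogeneousComponent_isHomogeneous ij.2 g)
    rw [homogeneousComponent_of_mem hmem]
    by_cases h : ij.1 + ij.2 = n
    · simp [h]
    · simp [h, Ne.symm h]
  rw [key]
  apply Finset.sum_subset
  · intro x hx
    rw [Finset.mem_filter] at hx
    exact Finset.HasAntidiagonal.mem_antidiagonal.2 hx.2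
  · intro x hx hnx
    rw [Finset.HasAntidiagonal.mem_antidiagonal] at hx
    have : f.totalDegree + 1 ≤ x.1 ∨ g.totalDegree + 1 ≤ x.2 := by
      by_contra hcon
      push_neg at hcon
      exact hnx (Finset.mem_filter.2 ⟨Finset.mem_product.2
        ⟨Finset.mem_range.2 hcon.1, Finset.mem_range.2 hcon.2⟩, hx⟩)
    rcases this with h | h
    · rw [homogeneousComponent_eq_zero x.1 f (by omega), zero_mul]
    · rw [homogeneousComponent_eq_zero x.2 g (by omega), mul_zero]

lemma mul_low {f g : MvPolynomial (Fin p) ℝ} {a b : ℕ}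
    (hf : ∀ k < a, homogeneousComponent k f = 0)
    (hg : ∀ k < b, homogeneousComponent k g = 0) :
    (∀ m < a + b, homogeneousComponent m (f * g) = 0) ∧
      homogeneousComponent (a + b) (f * g)
        = homogeneousComponent a f * homogeneousComponent b g := by
  constructor
  · intro m hm
    rw [hc_mul]
    refine Finset.sum_eq_zero fun ij hij => ?_
    rw [Finset.HasAntidiagonal.mem_antidiagonal] at hij
    rcases lt_or_ge ij.1 a with h | h
    · rw [hf _ h, zero_mul]
    · rw [hg _ (by omega), mul_zero]
  · rw [hc_mul, Finset.sum_eq_single (a, b)]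
    · intro ij hij hne
      rw [Finset.HasAntidiagonal.mem_antidiagonal] at hij
      rcases lt_or_ge ij.1 a with h | h
      · rw [hf _ h, zero_mul]
      · rcases lt_or_ge ij.2 b with h2 | h2
        · rw [hg _ h2, mul_zero]
        · exact absurd (Prod.ext (by omega) (by omega)) hne
    · intro hmem
      exact absurd (Finset.HasAntidiagonal.mem_antidiagonal.2 (by simp)) hmem

lemma prod_low {ι : Type*} (s : Finset ι) (f : ι → MvPolynomial (Fin p) ℝ) (a : ι → ℕ)
    (hf : ∀ i ∈ s, ∀ k < a i, homogeneousComponent k (f i) = 0) :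
    (∀ m < ∑ i ∈ s, a i, homogeneousComponent m (∏ i ∈ s, f i) = 0) ∧
      homogeneousComponent (∑ i ∈ s, a i) (∏ i ∈ s, f i)
        = ∏ i ∈ s, homogeneousComponent (a i) (f i) := by
  induction s using Finset.cons_induction with
  | empty =>
    constructor
    · intro m hm; simp at hm
    · simp only [Finset.sum_empty, Finset.prod_empty]
      rw [homogeneousComponent_of_mem ((mem_homogeneousSubmodule _ _).2
        (isHomogeneous_one _ _))]
      simp
  | cons i t hi ih =>
    obtain ⟨ih1, ih2⟩ := ih (fun j hj => hf j (Finset.mem_cons_of_mem hj))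
    rw [Finset.sum_cons, Finset.prod_cons, Finset.prod_cons]
    obtain ⟨m1, m2⟩ := mul_low (hf i (Finset.mem_cons_self i t)) ih1
    exact ⟨m1, m2.trans (by rw [ih2])⟩

lemma det_low {q : ℕ} (H B : Matrix (Fin q) (Fin q) (MvPolynomial (Fin p) ℝ)) (α : Fin q → ℕ)
    (h : ∀ i j k, k < α i → homogeneousComponent k (H i j) = 0)
    (hB : ∀ i j, B i j = homogeneousComponent (α i) (H i j)) :
    (∀ m < ∑ i, α i, homogeneousComponent m H.det = 0) ∧
      homogeneousComponent (∑ i, α i) H.det = B.det := by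
  have hterm : ∀ σ : Equiv.Perm (Fin q),
      (∀ m < ∑ i, α i, homogeneousComponent m (∏ i, H (σ i) i) = 0) ∧
      homogeneousComponent (∑ i, α i) (∏ i, H (σ i) i) = ∏ i, B (σ i) i := by
    intro σ
    have h0 := prod_low Finset.univ (fun i => H (σ i) i) (fun i => α (σ i))
      (fun i _ k hk => h (σ i) i k hk)
    rw [Equiv.sum_comp σ α] at h0
    refine ⟨h0.1, h0.2.trans ?_⟩
    exact Finset.prod_congr rfl fun i _ => (hB (σ i) i).symm
  constructor
  · intro m hm
    rw [Matrix.det_apply, map_sum]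
    refine Finset.sum_eq_zero fun σ _ => ?_
    rw [Units.smul_def, map_zsmul, (hterm σ).1 m hm, smul_zero]
  · rw [Matrix.det_apply, map_sum, Matrix.det_apply]
    refine Finset.sum_congr rfl fun σ _ => ?_
    rw [Units.smul_def, Units.smul_def, map_zsmul, (hterm σ).2]

end StmtAux

-- continuing inside namespace assumptions: lowDeg etc defined in outer file
section LowDegPart
open MvPolynomial Matrix Finset

variable {p : ℕ}

lemma lowDeg_le' {h : MvPolynomial (Fin p) ℝ} {n : ℕ}
    (hc : homogeneousComponent n h ≠ 0) : lowDeg h ≤ n := by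
  unfold lowDeg
  exact sInf_le ⟨n, rfl, hc⟩

lemma le_lowDeg' {h : MvPolynomial (Fin p) ℝ} {n : ℕ}
    (hc : ∀ k < n, homogeneousComponent k h = 0) : (n : ℕ∞) ≤ lowDeg h := by
  unfold lowDeg
  refine le_sInf ?_
  rintro x ⟨m, rfl, hm⟩
  by_contra hlt
  push_neg at hlt
  exact hm (hc m (by exact_mod_cast hlt))

lemma lowDeg_eq_iff' {h : MvPolynomial (Fin p) ℝ} {n : ℕ}
    (hc : ∀ k < n, homogeneousComponent k h = 0) :
    lowDeg h = n ↔ homogeneousComponent n h ≠ 0 := by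
  constructor
  · intro he hn0
    have h2 : ∀ k < n + 1, homogeneousComponent k h = 0 := by
      intro k hk
      rcases Nat.lt_succ_iff_lt_or_eq.1 hk with h' | h'
      · exact hc k h'
      · subst h'; exact hn0
    have h3 := le_lowDeg' h2
    rw [he] at h3
    exact absurd (by exact_mod_cast h3 : n + 1 ≤ n) (by omega)
  · intro hne
    exact le_antisymm (lowDeg_le' hne) (le_lowDeg' hc)

lemma lowDeg_C_mul {c : ℝ} (hc : c ≠ 0) (f : MvPolynomial (Fin p) ℝ) :
    lowDeg (MvPolynomial.C c * f) = lowDeg f := by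
  have hcomp : ∀ n : ℕ, homogeneousComponent n (MvPolynomial.C c * f) = 0 ↔
      homogeneousComponent n f = 0 := by
    intro n
    rw [← smul_eq_C_mul, _root_.map_smul, smul_eq_C_mul, mul_eq_zero]
    simp [MvPolynomial.C_eq_zero, hc]
  unfold lowDeg
  congr 1
  ext k
  simp only [Set.mem_setOf_eq]
  exact exists_congr fun n => and_congr_right fun _ => not_congr (hcomp n)

lemma smulMat_submatrix_det {q : ℕ} (S : Matrix (Fin q) (Fin q) ℝ)
    (G : Matrix (Fin q) (Fin p) (MvPolynomial (Fin p) ℝ)) (e : Fin q ↪ Fin p) :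
    ((smulMat S G).submatrix id e).det
      = MvPolynomial.C S.det * (G.submatrix id e).det := by
  have h1 : (smulMat S G).submatrix id e
      = (S.map (MvPolynomial.C : ℝ → MvPolynomial (Fin p) ℝ)) * (G.submatrix id e) := by
    ext i j
    simp [smulMat, Matrix.mul_apply, Matrix.submatrix_apply, Matrix.map_apply]
  have h2 : (S.map (MvPolynomial.C : ℝ → MvPolynomial (Fin p) ℝ)).det
      = MvPolynomial.C S.det := by
    rw [show S.map (MvPolynomial.C : ℝ → MvPolynomial (Fin p) ℝ)
        = (MvPolynomial.C : ℝ →+* MvPolynomial (Fin p) ℝ).mapMatrix S from rfl,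
      ← RingHom.map_det]
  rw [h1, Matrix.det_mul, h2]

end LowDegPart

/-- Lemma 4.1: if `G` is a full row rank `q×p` matrix of polynomials
(`q ≤ p`), `S` is nonsingular and `α = (α_1,…,α_q)` are nonnegative integers such that
the limit `Ḡ(y) = lim_{λ→∞} diag(λ^{α_i}) S G(y/λ)` exists (equivalently, no entry of
row `i` of `S·G` has a nonzero homogeneous component of degree `< α_i`) and `Ḡ` is a
nonzero matrix of polynomials, then `Σ α_i ≤ ᾱ(G)` and `Ḡ` has full row rank iff
`Σ α_i = ᾱ(G)`. -/
theorem stmt2 {q p : ℕ} (hqp : q ≤ p)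
    (G : Matrix (Fin q) (Fin p) (MvPolynomial (Fin p) ℝ))
    (hG : fullRowRank G)
    (S : Matrix (Fin q) (Fin q) ℝ) (hS : IsUnit S.det)
    (α : Fin q → ℕ)
    (hlim : ∀ i j k, k < α i → homogeneousComponent k (smulMat S G i j) = 0)
    (hnz : gbarMat S G α ≠ 0) :
    (∑ i, (α i : ℕ∞)) ≤ alphaBar G ∧
      (fullRowRank (gbarMat S G α) ↔ (∑ i, (α i : ℕ∞)) = alphaBar G) := by
  classical
  have hSd : S.det ≠ 0 := hS.ne_zero
  set s : ℕ := ∑ i, α i with hs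
  have hsum : (∑ i, (α i : ℕ∞)) = (s : ℕ∞) := by
    rw [hs]; exact (Nat.cast_sum _ _).symm
  have key : ∀ e : Fin q ↪ Fin p,
      (∀ m < s, homogeneousComponent m ((smulMat S G).submatrix id e).det = 0) ∧
      homogeneousComponent s ((smulMat S G).submatrix id e).det
        = ((gbarMat S G α).submatrix id e).det :=
    fun e => StmtAux.det_low ((smulMat S G).submatrix id e)
      ((gbarMat S G α).submatrix id e) α
      (fun i j k hk => hlim i (e j) k hk) (fun i j => rfl)
  have hld : ∀ e : Fin q ↪ Fin p,
      lowDeg ((G.submatrix id e).det) = lowDeg (((smulMat S G).submatrix id e).det) := by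
    intro e
    rw [smulMat_submatrix_det, lowDeg_C_mul hSd]
  have hge : ∀ e : Fin q ↪ Fin p, (s : ℕ∞) ≤ lowDeg ((G.submatrix id e).det) := by
    intro e
    rw [hld e]
    exact le_lowDeg' (key e).1
  have h1 : (s : ℕ∞) ≤ alphaBar G := le_iInf hge
  rw [hsum]
  refine ⟨h1, ?_, ?_⟩
  · rintro ⟨e, he⟩
    have hc : homogeneousComponent s ((smulMat S G).submatrix id e).det ≠ 0 := by
      rw [(key e).2]; exact he
    have h2 : lowDeg (((smulMat S G).submatrix id e).det) = s :=
      (lowDeg_eq_iff' (key e).1).2 hc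
    have h3 : alphaBar G ≤ (s : ℕ∞) := by
      refine iInf_le_of_le e ?_
      rw [hld e, h2]
    exact le_antisymm h1 h3
  · intro heq
    have hne : Nonempty (Fin q ↪ Fin p) := ⟨⟨Fin.castLE hqp, Fin.castLE_injective hqp⟩⟩
    obtain ⟨e, -, hmin⟩ := Finset.exists_min_image Finset.univ
      (fun e : Fin q ↪ Fin p => lowDeg ((G.submatrix id e).det))
      ⟨Classical.arbitrary _, Finset.mem_univ _⟩
    have hmin' : alphaBar G = lowDeg ((G.submatrix id e).det) :=
      le_antisymm (iInf_le _ e) (le_iInf fun e' => hmin e' (Finset.mem_univ _))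
    have h3 : lowDeg (((smulMat S G).submatrix id e).det) = s := by
      rw [← hld e, ← hmin', ← heq]
    have h4 := (lowDeg_eq_iff' (key e).1).1 h3
    rw [(key e).2] at h4
    exact ⟨e, h4⟩
end

section
/- Let g : ℝ^p → ℝ^q be a polynomial map with g(0) = 0 and Jacobian G(y). Let S be a nonsingular real q×q matrix and α_1,…,α_q nonnegative integers such that no entry of row i of S·G(y) has a nonzero homogeneous component of degree < α_i; let Ḡ(y) be the matrix whose row i consists of the degree-α_i homogeneous components of row i of S·G, and let ḡ_i(y) be the degree-(α_i+1) homogeneous component of (S g)_i. Fix y ∈ ℝ^p such that Ḡ(y) Ḡ(y)' is invertible. Let Ω(λ) be positive definite p×p matrices with Ω(λ) → Ω⁰ as λ → ∞, where Ω⁰ is positive definite. Then for all λ sufficiently large the matrix G(y/λ) Ω(λ) G(y/λ)' is invertible, and the Wald quadratic form converges: λ² g(y/λ)' [G(y/λ) Ω(λ) G(y/λ)']⁻¹ g(y/λ) → ḡ(y)' [Ḡ(y) Ω⁰ Ḡ(y)']⁻¹ ḡ(y) as λ → ∞. -/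
open MvPolynomial Matrix Filter Topology

section Aux

lemma degree_eq_sum_univ {p : ℕ} (d : Fin p →₀ ℕ) : d.degree = ∑ i, d i := by
  rw [Finsupp.degree]
  exact Finset.sum_subset (Finset.subset_univ _) (fun i _ h => Finsupp.notMem_support_iff.mp h)

lemma coeff_pderiv {p : ℕ} (i : Fin p) (f : MvPolynomial (Fin p) ℝ) (m : Fin p →₀ ℕ) :
    coeff m (pderiv i f) = (m i + 1 : ℕ) * coeff (m + Finsupp.single i 1) f := by
  induction f using MvPolynomial.induction_on' with
  | add f g hf hg => simp [hf, hg, mul_add]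
  | monomial s a =>
    rw [pderiv_monomial, coeff_monomial, coeff_monomial]
    split_ifs with h1 h2 h2
    · subst h2
      simp [add_comm]
      ring
    · have hs : s i = 0 := by
        by_contra hne
        exact h2 (by rw [← h1, tsub_add_cancel_of_le (Finsupp.single_le_iff.mpr (by omega))])
      simp [hs]
    · exact absurd (by rw [h2, add_tsub_cancel_right]) h1
    · ring

lemma eval_isHomogeneous_smul {p : ℕ} {φ : MvPolynomial (Fin p) ℝ} {n : ℕ}
    (h : φ.IsHomogeneous n) (c : ℝ) (x : Fin p → ℝ) :
    eval (fun i => c * x i) φ = c ^ n * eval x φ := by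
  rw [eval_eq, eval_eq, Finset.mul_sum]
  refine Finset.sum_congr rfl fun d hd => ?_
  have hdeg : ∑ i ∈ d.support, d i = n := by
    have := h (MvPolynomial.mem_support_iff.mp hd)
    rw [Pi.one_def, ← Finsupp.degree_eq_weight_one] at this
    exact this
  rw [show ∀ s : Finset (Fin p), (∏ i ∈ s, (c * x i) ^ d i)
      = (∏ i ∈ s, c ^ d i) * ∏ i ∈ s, x i ^ d i from
    fun s => by rw [← Finset.prod_mul_distrib]; exact Finset.prod_congr rfl fun i _ => mul_pow _ _ _,
    Finset.prod_pow_eq_pow_sum, hdeg]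
  ring

lemma key_tendsto {p : ℕ} (P : MvPolynomial (Fin p) ℝ) (n : ℕ)
    (hlow : ∀ k < n, homogeneousComponent k P = 0) (y : Fin p → ℝ) :
    Tendsto (fun lam : ℝ => lam ^ n * eval (fun t => y t / lam) P) atTop
      (nhds (eval y (homogeneousComponent n P))) := by
  set M := max P.totalDegree n with hM
  have hsum : ∑ k ∈ Finset.range (M + 1), homogeneousComponent k P = P := by
    conv_rhs => rw [← sum_homogeneousComponent P]
    symm
    apply Finset.sum_subset
      (Finset.range_subset_range.mpr (show P.totalDegree + 1 ≤ M + 1 by omega))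
    intro k _ hk
    refine homogeneousComponent_eq_zero k P ?_
    simp only [Finset.mem_range, not_lt] at hk
    omega
  have hG : Tendsto (fun lam : ℝ => ∑ k ∈ Finset.range (M + 1),
      (lam⁻¹) ^ (k - n) * eval y (homogeneousComponent k P)) atTop
      (nhds (eval y (homogeneousComponent n P))) := by
    have := tendsto_finset_sum (Finset.range (M + 1))
      (f := fun k (lam : ℝ) => (lam⁻¹) ^ (k - n) * eval y (homogeneousComponent k P))
      (a := fun k => if k = n then eval y (homogeneousComponent n P) else 0)
      (x := atTop) ?_
    · convert this using 2
      rw [Finset.sum_ite_eq' (Finset.range (M+1)) n]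
      have hnM : n ≤ M := le_max_right _ _
      simp [Finset.mem_range, Nat.lt_succ_iff, hnM]
    · intro k _
      rcases lt_trichotomy k n with hk | rfl | hk
      · have h0 : homogeneousComponent k P = 0 := hlow k hk
        simp only [h0, map_zero, mul_zero, if_neg hk.ne]
        exact tendsto_const_nhds
      · simp only [if_pos rfl, Nat.sub_self, pow_zero, one_mul]
        exact tendsto_const_nhds
      · simp only [if_neg hk.ne']
        have h0 : Tendsto (fun lam : ℝ => (lam⁻¹) ^ (k - n)) atTop (nhds 0) := by
          have := (tendsto_inv_atTop_zero (𝕜 := ℝ)).pow (k - n)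
          rwa [zero_pow (by omega)] at this
        simpa using h0.mul_const _
  refine hG.congr' ?_
  filter_upwards [eventually_ne_atTop (0 : ℝ)] with lam hlam
  have hev : eval (fun t => y t / lam) P
      = ∑ k ∈ Finset.range (M + 1), (lam⁻¹) ^ k * eval y (homogeneousComponent k P) := by
    conv_lhs => rw [← hsum]
    rw [map_sum]
    refine Finset.sum_congr rfl fun k _ => ?_
    have : (fun t => y t / lam) = fun t => lam⁻¹ * y t := by
      funext t; rw [div_eq_inv_mul]
    rw [this, eval_isHomogeneous_smul (homogeneousComponent_isHomogeneous k P)]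
  rw [hev, Finset.mul_sum]
  refine Finset.sum_congr rfl fun k _ => ?_
  rcases le_or_gt n k with hk | hk
  · obtain ⟨m, rfl⟩ := Nat.exists_eq_add_of_le hk
    rw [Nat.add_sub_cancel_left, pow_add, ← mul_assoc, ← mul_assoc, ← mul_pow,
      mul_inv_cancel₀ hlam, one_pow, one_mul]
  · rw [hlow k hk]
    simp

lemma hc_eq_zero_of_derivs {p : ℕ} (Q : MvPolynomial (Fin p) ℝ) (n : ℕ)
    (h0 : coeff 0 Q = 0)
    (hD : ∀ (j : Fin p) k, k < n → homogeneousComponent k (pderiv j Q) = 0) :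
    ∀ k, k ≤ n → homogeneousComponent k Q = 0 := by
  have key : ∀ d : Fin p →₀ ℕ, d.degree ≤ n → coeff d Q = 0 := by
    intro d hd
    rcases eq_or_ne d 0 with rfl | hne
    · exact h0
    · obtain ⟨j, hj⟩ : ∃ j, d j ≠ 0 := by
        by_contra h
        push_neg at h
        exact hne (Finsupp.ext h)
      set m := d - Finsupp.single j 1 with hm
      have hle : Finsupp.single j 1 ≤ d := Finsupp.single_le_iff.mpr (by omega)
      have hmd : m + Finsupp.single j 1 = d := tsub_add_cancel_of_le hle
      have hsingle : Finsupp.degree (Finsupp.single j (1:ℕ)) = 1 := by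
        rw [degree_eq_sum_univ]
        simp [Finsupp.single_apply]
      have hdeg : m.degree + 1 = d.degree := by
        rw [← hmd, degree_eq_sum_univ m, degree_eq_sum_univ]
        simp [Finsupp.add_apply, Finset.sum_add_distrib, Finsupp.single_apply]
      have hdne : d.degree ≠ 0 := fun h => hne ((Finsupp.degree_eq_zero_iff d).mp h)
      have h1 := hD j m.degree (by omega)
      have h2 : coeff m (homogeneousComponent m.degree (pderiv j Q)) = coeff m (pderiv j Q) := by
        rw [coeff_homogeneousComponent, if_pos rfl]
      rw [h1] at h2
      rw [coeff_pderiv, hmd] at h2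
      have : ((m j + 1 : ℕ) : ℝ) ≠ 0 := by positivity
      have := mul_eq_zero.mp h2.symm
      tauto
  intro k hk
  ext d
  rw [coeff_homogeneousComponent]
  split_ifs with h
  · exact key d (h ▸ hk)
  · simp

end Aux

/-- The Jacobian matrix of a polynomial map `g : ℝ^p → ℝ^q`. -/
noncomputable def jacPoly {q p : ℕ} (g : Fin q → MvPolynomial (Fin p) ℝ) :
    Matrix (Fin q) (Fin p) (MvPolynomial (Fin p) ℝ) :=
  Matrix.of fun i j => MvPolynomial.pderiv j (g i)

/-- The Jacobian of `g` evaluated at `y/λ`, as a real matrix. -/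
noncomputable def jacAt {q p : ℕ} (g : Fin q → MvPolynomial (Fin p) ℝ)
    (y : Fin p → ℝ) (lam : ℝ) : Matrix (Fin q) (Fin p) ℝ :=
  Matrix.of fun i j => eval (fun t => y t / lam) (jacPoly g i j)

/-- The map `g` evaluated at `y/λ`, as a real vector. -/
noncomputable def gAt {q p : ℕ} (g : Fin q → MvPolynomial (Fin p) ℝ)
    (y : Fin p → ℝ) (lam : ℝ) : Fin q → ℝ :=
  fun i => eval (fun t => y t / lam) (g i)

set_option maxHeartbeats 1600000 in
/-- convergence of the Wald quadratic form when the limit matrix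
`Ḡ(y)` has `Ḡ(y) Ḡ(y)'` invertible: for all `λ` large enough
`G(y/λ) Ω(λ) G(y/λ)'` is invertible and
`λ² g(y/λ)' [G(y/λ) Ω(λ) G(y/λ)']⁻¹ g(y/λ) → ḡ(y)' [Ḡ(y) Ω⁰ Ḡ(y)']⁻¹ ḡ(y)`. -/
theorem stmt7 {q p : ℕ} (g : Fin q → MvPolynomial (Fin p) ℝ)
    (hg0 : ∀ i, eval (0 : Fin p → ℝ) (g i) = 0)
    (S : Matrix (Fin q) (Fin q) ℝ) (hS : IsUnit S.det)
    (α : Fin q → ℕ)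
    (hlow : ∀ i j k, k < α i → homogeneousComponent k (smulMat S (jacPoly g) i j) = 0)
    (y : Fin p → ℝ)
    (Gbar : Matrix (Fin q) (Fin p) ℝ)
    (hGbar : Gbar = Matrix.of fun i j =>
      eval y (homogeneousComponent (α i) (smulMat S (jacPoly g) i j)))
    (gbar : Fin q → ℝ)
    (hgbar : gbar = fun i => eval y (homogeneousComponent (α i + 1) (∑ k, C (S i k) * g k)))
    (hinvbar : IsUnit (Gbar * Gbarᵀ).det)
    (Om : ℝ → Matrix (Fin p) (Fin p) ℝ)
    (hOm : ∀ lam, (Om lam).PosDef)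
    (Om0 : Matrix (Fin p) (Fin p) ℝ) (hOm0 : Om0.PosDef)
    (hOmlim : Tendsto Om atTop (nhds Om0)) :
    (∀ᶠ lam : ℝ in atTop, IsUnit (jacAt g y lam * Om lam * (jacAt g y lam)ᵀ).det) ∧
    Tendsto (fun lam : ℝ =>
        lam ^ 2 * (gAt g y lam ⬝ᵥ ((jacAt g y lam * Om lam * (jacAt g y lam)ᵀ)⁻¹ *ᵥ gAt g y lam)))
      atTop (nhds (gbar ⬝ᵥ ((Gbar * Om0 * Gbarᵀ)⁻¹ *ᵥ gbar))) := by
  classical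
  set Q : Fin q → MvPolynomial (Fin p) ℝ := fun i => ∑ k, C (S i k) * g k with hQ
  have hpderivQ : ∀ i j, pderiv j (Q i) = smulMat S (jacPoly g) i j := by
    intro i j
    simp only [hQ, smulMat, jacPoly, map_sum, pderiv_C_mul, Matrix.of_apply]
  have hQlow : ∀ i k, k ≤ α i → homogeneousComponent k (Q i) = 0 := by
    intro i
    apply hc_eq_zero_of_derivs
    · have hg0' : ∀ k, constantCoeff (g k) = 0 := by
        intro k
        have := hg0 k
        rwa [eval_zero] at this
      have h1 : eval (0 : Fin p → ℝ) (Q i) = 0 := by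
        simp [hQ, eval_zero, hg0']
      rwa [eval_zero, constantCoeff_eq] at h1
    · intro j k hk
      rw [hpderivQ]
      exact hlow i j k hk
  -- matrices
  set Dm : ℝ → Matrix (Fin q) (Fin q) ℝ :=
    fun lam => Matrix.diagonal (fun i => lam ^ (α i)) with hDm
  set Amat : ℝ → Matrix (Fin q) (Fin p) ℝ :=
    fun lam => Dm lam * S * jacAt g y lam with hAmat
  set bvec : ℝ → (Fin q → ℝ) :=
    fun lam i => lam ^ (α i + 1) * eval (fun t => y t / lam) (Q i) with hbvec
  set Nmat : ℝ → Matrix (Fin q) (Fin q) ℝ :=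
    fun lam => Amat lam * Om lam * (Amat lam)ᵀ with hNmat
  set L : Matrix (Fin q) (Fin q) ℝ := Gbar * Om0 * Gbarᵀ with hL
  -- Step A : Amat → Gbar
  have hA : Tendsto Amat atTop (nhds Gbar) := by
    refine tendsto_pi_nhds.mpr ?_
    intro i
    rw [tendsto_pi_nhds]
    intro j
    have hentry : ∀ lam : ℝ, Amat lam i j
        = lam ^ (α i) * eval (fun t => y t / lam) (smulMat S (jacPoly g) i j) := by
      intro lam
      rw [hAmat]
      show (Dm lam * S * jacAt g y lam) i j = _
      rw [Matrix.mul_assoc]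
      show (Matrix.diagonal (fun i => lam ^ α i) * (S * jacAt g y lam)) i j = _
      rw [Matrix.diagonal_mul, Matrix.mul_apply]
      simp only [smulMat, jacPoly, jacAt, map_sum, eval_mul, eval_C, Matrix.of_apply,
        Finset.mul_sum]
    have := key_tendsto (smulMat S (jacPoly g) i j) (α i) (hlow i j) y
    rw [hGbar]
    simp only [Matrix.of_apply]
    exact Tendsto.congr (fun lam => (hentry lam).symm) this
  -- Step B : bvec → gbar
  have hb : Tendsto bvec atTop (nhds gbar) := by
    rw [tendsto_pi_nhds]
    intro i
    have := key_tendsto (Q i) (α i + 1) (fun k hk => hQlow i k (by omega)) y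
    rw [hgbar]
    exact this
  -- Step C : L is invertible
  have hLdet : IsUnit L.det := by
    have hpd : L.PosDef := by
      refine Matrix.PosDef.of_dotProduct_mulVec_pos ?_ ?_
      · show Lᴴ = L
        rw [hL]
        rw [Matrix.conjTranspose_eq_transpose_of_trivial]
        rw [Matrix.transpose_mul, Matrix.transpose_mul, Matrix.transpose_transpose]
        have : Om0ᵀ = Om0 := by
          have := hOm0.1
          rwa [Matrix.IsHermitian, Matrix.conjTranspose_eq_transpose_of_trivial] at this
        rw [this, Matrix.mul_assoc]
      · intro x hx
        have hz : x ⬝ᵥ (L *ᵥ x) = (Gbarᵀ *ᵥ x) ⬝ᵥ (Om0 *ᵥ (Gbarᵀ *ᵥ x)) := by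
          rw [hL, ← Matrix.mulVec_mulVec, ← Matrix.mulVec_mulVec,
            Matrix.dotProduct_mulVec x Gbar, ← Matrix.mulVec_transpose]
        have hzne : Gbarᵀ *ᵥ x ≠ 0 := by
          intro h0
          apply hx
          have h1 : (Gbar * Gbarᵀ) *ᵥ x = 0 := by
            rw [← Matrix.mulVec_mulVec, h0, Matrix.mulVec_zero]
          have h2 := congrArg (fun v => (Gbar * Gbarᵀ)⁻¹ *ᵥ v) h1
          simpa [Matrix.mulVec_mulVec, Matrix.nonsing_inv_mul _ hinvbar] using h2
        have := hOm0.dotProduct_mulVec_pos hzne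
        simpa [hz] using this
    exact isUnit_iff_ne_zero.mpr hpd.det_pos.ne'
  have hLdet_ne : L.det ≠ 0 := isUnit_iff_ne_zero.mp hLdet
  -- Step D : Nmat → L and eventual nonvanishing of det
  have hN : Tendsto Nmat atTop (nhds L) := by
    have hpair : Tendsto (fun lam => (Amat lam, Om lam)) atTop (nhds (Gbar, Om0)) :=
      hA.prodMk_nhds hOmlim
    have hcont : Continuous (fun x : Matrix (Fin q) (Fin p) ℝ × Matrix (Fin p) (Fin p) ℝ =>
        x.1 * x.2 * x.1ᵀ) :=
      (continuous_fst.matrix_mul continuous_snd).matrix_mul continuous_fst.matrix_transpose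
    have h3 := (hcont.tendsto (Gbar, Om0)).comp hpair
    rw [hNmat, hL]
    simpa only [Function.comp_def] using h3
  have hdetN : Tendsto (fun lam => (Nmat lam).det) atTop (nhds L.det) := by
    have h3 := ((continuous_id.matrix_det).tendsto L).comp hN
    simpa only [Function.comp_def, id] using h3
  have hdetne : ∀ᶠ lam : ℝ in atTop, (Nmat lam).det ≠ 0 := hdetN.eventually_ne hLdet_ne
  -- Step E : limit of the auxiliary scalar function
  have hH : Tendsto (fun lam : ℝ =>
      ((Nmat lam).det)⁻¹ * (bvec lam ⬝ᵥ ((Nmat lam).adjugate *ᵥ bvec lam))) atTop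
      (nhds ((L.det)⁻¹ * (gbar ⬝ᵥ (L.adjugate *ᵥ gbar)))) := by
    have h1 := hdetN.inv₀ hLdet_ne
    have hpair : Tendsto (fun lam => (Nmat lam, bvec lam)) atTop (nhds (L, gbar)) :=
      hN.prodMk_nhds hb
    have hcont : Continuous (fun x : Matrix (Fin q) (Fin q) ℝ × (Fin q → ℝ) =>
        x.2 ⬝ᵥ (x.1.adjugate *ᵥ x.2)) :=
      continuous_snd.dotProduct (continuous_fst.matrix_adjugate.matrix_mulVec
        continuous_snd)
    have h2 := (hcont.tendsto (L, gbar)).comp hpair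
    simp only [Function.comp] at h2
    exact h1.mul h2
  -- target rewriting
  have htarget : gbar ⬝ᵥ (L⁻¹ *ᵥ gbar) = (L.det)⁻¹ * (gbar ⬝ᵥ (L.adjugate *ᵥ gbar)) := by
    rw [Matrix.inv_def, Ring.inverse_eq_inv', Matrix.smul_mulVec, dotProduct_smul,
      smul_eq_mul]
  -- Step F : eventual identities
  have hfact : ∀ lam : ℝ, lam ≠ 0 →
      jacAt g y lam * Om lam * (jacAt g y lam)ᵀ
        = (S⁻¹ * (Dm lam)⁻¹) * Nmat lam * (S⁻¹ * (Dm lam)⁻¹)ᵀ ∧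
      (S⁻¹ * (Dm lam)⁻¹)⁻¹ = Dm lam * S ∧ IsUnit (Dm lam).det := by
    intro lam hlam
    have hDmdet : IsUnit (Dm lam).det := by
      rw [hDm]
      simp only [Matrix.det_diagonal]
      exact isUnit_iff_ne_zero.mpr (Finset.prod_ne_zero_iff.mpr
        (fun i _ => pow_ne_zero _ hlam))
    have hjac : jacAt g y lam = (S⁻¹ * (Dm lam)⁻¹) * Amat lam := by
      show jacAt g y lam = S⁻¹ * (Dm lam)⁻¹ * (Dm lam * S * jacAt g y lam)
      rw [Matrix.mul_assoc (Dm lam) S (jacAt g y lam), Matrix.mul_assoc,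
        Matrix.nonsing_inv_mul_cancel_left _ _ hDmdet,
        Matrix.nonsing_inv_mul_cancel_left _ _ hS]
    refine ⟨?_, ?_, hDmdet⟩
    · rw [hNmat]
      conv_lhs => rw [hjac]
      rw [Matrix.transpose_mul]
      simp only [Matrix.mul_assoc]
    · rw [Matrix.mul_inv_rev, Matrix.nonsing_inv_nonsing_inv _ hDmdet,
        Matrix.nonsing_inv_nonsing_inv _ hS]
  -- first conjunct
  have hfirst : ∀ᶠ lam : ℝ in atTop,
      IsUnit (jacAt g y lam * Om lam * (jacAt g y lam)ᵀ).det := by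
    filter_upwards [hdetne, eventually_ne_atTop (0 : ℝ)] with lam hNe h0
    obtain ⟨hf, hinv, hDmdet⟩ := hfact lam h0
    rw [hf]
    rw [Matrix.det_mul, Matrix.det_mul, Matrix.det_transpose]
    have hEdet : (S⁻¹ * (Dm lam)⁻¹).det ≠ 0 := by
      rw [Matrix.det_mul, Matrix.det_nonsing_inv, Matrix.det_nonsing_inv,
        Ring.inverse_eq_inv']
      exact mul_ne_zero (inv_ne_zero (isUnit_iff_ne_zero.mp hS))
        (inv_ne_zero (isUnit_iff_ne_zero.mp hDmdet))
    exact isUnit_iff_ne_zero.mpr (mul_ne_zero (mul_ne_zero hEdet hNe) hEdet)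
  refine ⟨hfirst, ?_⟩
  -- second conjunct
  rw [htarget]
  refine hH.congr' ?_
  filter_upwards [eventually_ne_atTop (0 : ℝ)] with lam h0
  obtain ⟨hf, hinv, hDmdet⟩ := hfact lam h0
  -- rewrite the inverse
  have hinvmat : (jacAt g y lam * Om lam * (jacAt g y lam)ᵀ)⁻¹
      = (Dm lam * S)ᵀ * (Nmat lam)⁻¹ * (Dm lam * S) := by
    rw [hf, Matrix.mul_inv_rev, Matrix.mul_inv_rev, ← Matrix.transpose_nonsing_inv, hinv,
      Matrix.mul_assoc]
  have hbv : bvec lam = lam • ((Dm lam * S) *ᵥ gAt g y lam) := by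
    funext i
    rw [hbvec]
    simp only [Pi.smul_apply, smul_eq_mul, ← Matrix.mulVec_mulVec]
    have hdiag : ∀ v : Fin q → ℝ, (Dm lam *ᵥ v) i = lam ^ (α i) * v i := by
      intro v
      rw [hDm, Matrix.mulVec_diagonal]
    rw [hdiag]
    have hSg : (S *ᵥ gAt g y lam) i = eval (fun t => y t / lam) (Q i) := by
      rw [hQ]
      simp only [Matrix.mulVec, dotProduct, gAt, map_sum, eval_mul, eval_C]
    rw [hSg, pow_succ]
    ring
  -- final scalar computation
  have hscal : lam ^ 2 * (gAt g y lam ⬝ᵥ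
      ((jacAt g y lam * Om lam * (jacAt g y lam)ᵀ)⁻¹ *ᵥ gAt g y lam))
      = bvec lam ⬝ᵥ ((Nmat lam)⁻¹ *ᵥ bvec lam) := by
    rw [hinvmat, hbv]
    rw [Matrix.mul_assoc, ← Matrix.mulVec_mulVec, ← Matrix.mulVec_mulVec,
      Matrix.dotProduct_mulVec (gAt g y lam) ((Dm lam * S)ᵀ), Matrix.vecMul_transpose]
    rw [Matrix.mulVec_smul, dotProduct_smul, smul_dotProduct, smul_eq_mul, smul_eq_mul]
    ring
  rw [hscal]
  rw [Matrix.inv_def, Ring.inverse_eq_inv', Matrix.smul_mulVec, dotProduct_smul,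
    smul_eq_mul]
end

section
/- (Theorem 5.1, common degree) Let α be a nonnegative integer and let ḡ : ℝ^p → ℝ^q (q ≤ p) be a polynomial map each of whose components is a homogeneous polynomial of degree α + 1, with Jacobian Ḡ(z) = ∂ḡ/∂z'. Then for every z ∈ ℝ^p such that Ḡ(z) Ḡ(z)' is invertible, ḡ(z)' [Ḡ(z) Ḡ(z)']⁻¹ ḡ(z) ≤ (1/(1+α))² ‖z‖². -/
open MvPolynomial Matrix


lemma euler_eval {p n : ℕ} (f : MvPolynomial (Fin p) ℝ) (hf : f.IsHomogeneous n)
    (z : Fin p → ℝ) : ∑ j, z j * eval z (pderiv j f) = (n : ℝ) * eval z f := by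
  conv_lhs => rw [f.as_sum]
  conv_rhs => rw [f.as_sum]
  simp only [map_sum, Finset.mul_sum]
  rw [Finset.sum_comm]
  refine Finset.sum_congr rfl fun v hv => ?_
  have hdeg : ∑ i, v i = n := by
    have h := hf (mem_support_iff.mp hv)
    simpa [Finsupp.weight, Finsupp.linearCombination, Finsupp.sum_fintype] using h
  set a := coeff v f with ha
  have key : ∀ j, z j * eval z (pderiv j (monomial v a))
      = a * (v j : ℝ) * ∏ i, z i ^ v i := by
    intro j
    rw [pderiv_monomial, eval_monomial, Finsupp.prod_pow]
    rcases Nat.eq_zero_or_pos (v j) with h0 | h1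
    · simp [h0]
    · have hsub : ∀ i, ((v - Finsupp.single j 1 : Fin p →₀ ℕ) i) = if i = j then v j - 1 else v i := by
        intro i
        rcases eq_or_ne i j with rfl | hij
        · simp
        · simp [Finsupp.single_apply, hij, Ne.symm hij]
      have h1' : ∏ i, z i ^ ((v - Finsupp.single j 1 : Fin p →₀ ℕ) i)
          = z j ^ (v j - 1) * ∏ i ∈ Finset.univ.erase j, z i ^ v i := by
        rw [← Finset.mul_prod_erase Finset.univ _ (Finset.mem_univ j)]
        rw [hsub j, if_pos rfl]
        congr 1
        refine Finset.prod_congr rfl fun i hi => ?_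
        rw [hsub i, if_neg (Finset.mem_erase.mp hi).1]
      have h2 : ∏ i, z i ^ v i = z j ^ v j * ∏ i ∈ Finset.univ.erase j, z i ^ v i :=
        (Finset.mul_prod_erase Finset.univ _ (Finset.mem_univ j)).symm
      rw [h1', h2]
      have : z j * z j ^ (v j - 1) = z j ^ v j := by
        rw [← pow_succ']
        congr 1
        omega
      rw [← this]; ring
  rw [Finset.sum_congr rfl fun j _ => key j]
  rw [eval_monomial, Finsupp.prod_pow]
  rw [← Finset.sum_mul, ← Finset.mul_sum]
  have : ∑ j, (v j : ℝ) = (n : ℝ) := by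
    rw [← hdeg]; push_cast; ring
  rw [this]; ring


/-- Theorem 5.1, common degree: if every component of the polynomial
map `ḡ : ℝ^p → ℝ^q` (`q ≤ p`) is homogeneous of degree `α + 1`, with Jacobian `Ḡ`,
then for every `z` with `Ḡ(z) Ḡ(z)'` invertible,
`ḡ(z)' [Ḡ(z) Ḡ(z)']⁻¹ ḡ(z) ≤ (1/(1+α))² ‖z‖²` (Euclidean norm). -/
theorem stmt13 {q p : ℕ} (hqp : q ≤ p) (α : ℕ)
    (gb : Fin q → MvPolynomial (Fin p) ℝ)
    (hgb : ∀ i, (gb i).IsHomogeneous (α + 1))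
    (z : Fin p → ℝ)
    (Gz : Matrix (Fin q) (Fin p) ℝ)
    (hGz : Gz = Matrix.of fun i j => eval z (pderiv j (gb i)))
    (hinv : IsUnit (Gz * Gzᵀ).det) :
    (fun i => eval z (gb i)) ⬝ᵥ ((Gz * Gzᵀ)⁻¹ *ᵥ fun i => eval z (gb i)) ≤
      ((1 : ℝ) / (1 + α)) ^ 2 * ∑ j, z j ^ 2 := by
  set g : Fin q → ℝ := fun i => eval z (gb i) with hg
  set A : Matrix (Fin q) (Fin q) ℝ := (Gz * Gzᵀ)⁻¹ with hA
  set u : Fin q → ℝ := Gz *ᵥ z with hu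
  have hEuler : u = ((α : ℝ) + 1) • g := by
    funext i
    have h := euler_eval (gb i) (hgb i) z
    push_cast at h
    simp only [hu, mulVec, dotProduct, hGz, of_apply, Pi.smul_apply, smul_eq_mul, hg]
    rw [← h]
    exact Finset.sum_congr rfl fun j _ => mul_comm _ _
  set s : ℝ := u ⬝ᵥ (A *ᵥ u) with hs
  set w : Fin p → ℝ := Gzᵀ *ᵥ (A *ᵥ u) with hw
  have hGGA : (Gz * Gzᵀ) * A = 1 := Matrix.mul_nonsing_inv _ hinv
  have hww : w ⬝ᵥ w = s := by
    rw [hw, Matrix.dotProduct_mulVec, Matrix.vecMul_transpose, Matrix.mulVec_mulVec,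
      Matrix.mulVec_mulVec, hGGA, Matrix.one_mulVec]
  have hwz : w ⬝ᵥ z = s := by
    rw [hw, Matrix.mulVec_transpose, ← Matrix.dotProduct_mulVec, ← hu, dotProduct_comm, hs]
  have hZ : (0:ℝ) ≤ z ⬝ᵥ z := by
    exact Finset.sum_nonneg fun i _ => mul_self_nonneg _
  have hs0 : (0:ℝ) ≤ s := by
    rw [← hww]; exact Finset.sum_nonneg fun i _ => mul_self_nonneg _
  have hcs : s ^ 2 ≤ s * (z ⬝ᵥ z) := by
    have := Finset.sum_mul_sq_le_sq_mul_sq Finset.univ w z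
    calc s ^ 2 = (w ⬝ᵥ z) ^ 2 := by rw [hwz]
    _ ≤ (∑ i, w i ^ 2) * (∑ i, z i ^ 2) := by
        simpa [dotProduct] using this
    _ = s * (z ⬝ᵥ z) := by rw [← hww]; simp [dotProduct, sq]
  have hsZ : s ≤ z ⬝ᵥ z := by
    rcases eq_or_lt_of_le hs0 with h | h
    · rw [← h]; exact hZ
    · have := (mul_le_mul_iff_right₀ h).mp (by nlinarith : s * s ≤ s * (z ⬝ᵥ z))
      exact this
  have hgoal : g ⬝ᵥ (A *ᵥ g) = (1 / ((α:ℝ) + 1)) ^ 2 * s := by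
    have hα : ((α:ℝ) + 1) ≠ 0 := by positivity
    have hg' : g = (1 / ((α:ℝ) + 1)) • u := by
      rw [hEuler, smul_smul]; field_simp; rw [one_smul]
    rw [hg', Matrix.mulVec_smul, smul_dotProduct, dotProduct_smul, smul_eq_mul, smul_eq_mul, hs]
    ring
  calc g ⬝ᵥ (A *ᵥ g) = (1 / ((α:ℝ) + 1)) ^ 2 * s := hgoal
  _ ≤ (1 / ((α:ℝ) + 1)) ^ 2 * (z ⬝ᵥ z) := by
      apply mul_le_mul_of_nonneg_left hsZ; positivity
  _ = ((1 : ℝ) / (1 + α)) ^ 2 * ∑ j, z j ^ 2 := by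
      rw [add_comm (1:ℝ)]; simp [dotProduct, sq]
end

section
/- (Lemma 6.1, order selection) Let θ̄ ∈ ℝ^p, let λ_T → ∞ be positive reals, and on a probability space let θ̂_T be random vectors in ℝ^p such that λ_T(θ̂_T − θ̄) converges in probability to a random vector Z. Let Q₀, Q₁, …, Q_m : ℝ^p → ℝ be polynomial functions not all vanishing at θ̄, and let k = min{ j : Q_j(θ̄) ≠ 0 }. Fix c > 0 and 0 < δ < 1 and define thresholded estimators Q̂_{j,T} = Q_j(θ̂_T) if |Q_j(θ̂_T)| ≥ c λ_T^{−δ}, and Q̂_{j,T} = 0 otherwise; let k̂_T = min{ j : Q̂_{j,T} ≠ 0 } (set k̂_T = m+1 if all Q̂_{j,T} = 0). Then P(k̂_T = k) → 1 as T → ∞. -/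
open MvPolynomial Filter Topology MeasureTheory
open scoped Classical

/-- Auxiliary: polynomial evaluation is locally Lipschitz around any point. -/
lemma poly_loc_lip {p : ℕ} (q : MvPolynomial (Fin p) ℝ) (θb : Fin p → ℝ) :
    ∃ K r : ℝ, 0 < K ∧ 0 < r ∧ ∀ x : Fin p → ℝ, dist x θb ≤ r →
      |eval x q - eval θb q| ≤ K * dist x θb := by
  have hcd : ContDiff ℝ 1 (fun x : Fin p → ℝ => eval x q) := by
    apply contDiff_iff_contDiffAt.2
    intro x
    exact ((AnalyticOnNhd.eval_mvPolynomial (𝕜 := ℝ) q) x trivial).contDiffAt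
  obtain ⟨K, t, ht, hlip⟩ := hcd.locallyLipschitz θb
  obtain ⟨r, hr, hball⟩ := Metric.mem_nhds_iff.1 ht
  refine ⟨(K : ℝ) + 1, r / 2, by positivity, by positivity, fun x hx => ?_⟩
  have hxball : x ∈ t := hball (by
    simp only [Metric.mem_ball]
    linarith [hx])
  have hθb : (θb : Fin p → ℝ) ∈ t := hball (Metric.mem_ball_self hr)
  have := hlip.dist_le_mul x hxball θb hθb
  rw [Real.dist_eq] at this
  calc |eval x q - eval θb q| ≤ (K : ℝ) * dist x θb := this
    _ ≤ ((K : ℝ) + 1) * dist x θb := by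
        have := dist_nonneg (x := x) (y := θb); nlinarith

/-- Lemma 6.1, order selection: thresholding each `Q_j(θ̂_T)` at level
`c λ_T^{−δ}` and taking `k̂_T` to be the smallest index `j ≤ m` with a nonzero
thresholded value (`m+1` if all are zero) consistently selects
`k = min{ j : Q_j(θ̄) ≠ 0 }`: `P(k̂_T = k) → 1`. -/
theorem stmt16 {p : ℕ} {Ωs : Type*} [MeasurableSpace Ωs]
    (μ : Measure Ωs) [IsProbabilityMeasure μ]
    (θb : Fin p → ℝ)
    (lam : ℕ → ℝ) (hlampos : ∀ T, 0 < lam T) (hlam : Tendsto lam atTop atTop)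
    (θhat : ℕ → Ωs → Fin p → ℝ) (Z : Ωs → Fin p → ℝ)
    (hconv : ∀ ε > (0 : ℝ),
      Tendsto (fun T => μ {ω | ε < dist (lam T • (θhat T ω - θb)) (Z ω)}) atTop (nhds 0))
    (m : ℕ) (Q : ℕ → MvPolynomial (Fin p) ℝ)
    (hex : ∃ j ≤ m, eval θb (Q j) ≠ 0)
    (k : ℕ) (hk : k = sInf {j | j ≤ m ∧ eval θb (Q j) ≠ 0})
    (c δ : ℝ) (hc : 0 < c) (hδ0 : 0 < δ) (hδ1 : δ < 1)
    (Qhat : ℕ → ℕ → Ωs → ℝ)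
    (hQhat : ∀ j T ω, Qhat j T ω =
      if c * lam T ^ (-δ) ≤ |eval (θhat T ω) (Q j)| then eval (θhat T ω) (Q j) else 0)
    (khat : ℕ → Ωs → ℕ)
    (hkhat : ∀ T ω, khat T ω =
      if ∃ j ≤ m, Qhat j T ω ≠ 0 then sInf {j | j ≤ m ∧ Qhat j T ω ≠ 0} else m + 1) :
    Tendsto (fun T => μ {ω | khat T ω = k}) atTop (nhds 1) := by
  -- basic facts about k
  have hSne : {j | j ≤ m ∧ eval θb (Q j) ≠ 0}.Nonempty := by
    obtain ⟨j, hj, hj'⟩ := hex; exact ⟨j, hj, hj'⟩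
  have hkmem : k ∈ {j | j ≤ m ∧ eval θb (Q j) ≠ 0} := hk ▸ Nat.sInf_mem hSne
  have hkm : k ≤ m := hkmem.1
  have hfk : eval θb (Q k) ≠ 0 := hkmem.2
  have hzlt : ∀ j < k, eval θb (Q j) = 0 := by
    intro j hj
    by_contra h
    have : k ≤ j := hk ▸ Nat.sInf_le ⟨le_trans hj.le hkm, h⟩
    omega
  -- tendsto helpers
  have hpow : Tendsto (fun T => lam T ^ (1 - δ)) atTop atTop :=
    (tendsto_rpow_atTop (by linarith)).comp hlam
  have hth0 : Tendsto (fun T => c * lam T ^ (-δ)) atTop (nhds 0) := by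
    have h1 : Tendsto (fun T => lam T ^ (-δ)) atTop (nhds 0) :=
      (tendsto_rpow_neg_atTop hδ0).comp hlam
    simpa using h1.const_mul c
  have hthpos : ∀ T, 0 < c * lam T ^ (-δ) := fun T =>
    mul_pos hc (Real.rpow_pos_of_pos (hlampos T) _)
  -- key deterministic lemma
  have key : ∀ M : ℝ, ∀ᶠ T in atTop, ∀ ω, ‖Z ω‖ ≤ M →
      dist (lam T • (θhat T ω - θb)) (Z ω) ≤ 1 → khat T ω = k := by
    intro M
    have hdiv : Tendsto (fun T => (M + 1) / lam T) atTop (nhds 0) :=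
      tendsto_const_nhds.div_atTop hlam
    -- distance control on the good event
    have hdist : ∀ T ω, ‖Z ω‖ ≤ M → dist (lam T • (θhat T ω - θb)) (Z ω) ≤ 1 →
        dist (θhat T ω) θb ≤ (M + 1) / lam T := by
      intro T ω hZ hd
      have hX : ‖lam T • (θhat T ω - θb)‖ ≤ M + 1 := by
        have hdecomp : lam T • (θhat T ω - θb) =
            (lam T • (θhat T ω - θb) - Z ω) + Z ω := by abel
        calc ‖lam T • (θhat T ω - θb)‖
            = ‖(lam T • (θhat T ω - θb) - Z ω) + Z ω‖ := by rw [← hdecomp]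
          _ ≤ ‖lam T • (θhat T ω - θb) - Z ω‖ + ‖Z ω‖ := norm_add_le _ _
          _ ≤ 1 + M := by
              rw [← dist_eq_norm]; exact add_le_add hd hZ
          _ = M + 1 := by ring
      have hXeq : ‖lam T • (θhat T ω - θb)‖ = lam T * dist (θhat T ω) θb := by
        rw [norm_smul, Real.norm_eq_abs, abs_of_pos (hlampos T), dist_eq_norm]
      rw [hXeq] at hX
      rw [le_div_iff₀ (hlampos T)]
      linarith [hX]
    -- for j < k : thresholded to 0 eventually
    have hsmall : ∀ j < k, ∀ᶠ T in atTop, ∀ ω, ‖Z ω‖ ≤ M →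
        dist (lam T • (θhat T ω - θb)) (Z ω) ≤ 1 → Qhat j T ω = 0 := by
      intro j hj
      obtain ⟨K, r, hK, hr, hlip⟩ := poly_loc_lip (Q j) θb
      have E1 : ∀ᶠ T in atTop, (M + 1) / lam T ≤ r := hdiv.eventually_le_const hr
      have E2 : ∀ᶠ T in atTop, K * (M + 1) / c < lam T ^ (1 - δ) :=
        hpow.eventually_gt_atTop _
      filter_upwards [E1, E2] with T h1 h2 ω hZ hd
      have hdθ := hdist T ω hZ hd
      have hθr : dist (θhat T ω) θb ≤ r := hdθ.trans h1
      have hb : |eval (θhat T ω) (Q j)| ≤ K * ((M + 1) / lam T) := by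
        have := hlip (θhat T ω) hθr
        rw [hzlt j hj, sub_zero] at this
        exact this.trans (mul_le_mul_of_nonneg_left hdθ hK.le)
      have hlt : K * ((M + 1) / lam T) < c * lam T ^ (-δ) := by
        have hrpow : lam T ^ (-δ) = lam T ^ (1 - δ) / lam T := by
          have h := Real.rpow_sub (hlampos T) (1 - δ) 1
          rw [Real.rpow_one] at h
          rw [← h]
          norm_num
        have hgoal : K * (M + 1) < c * lam T ^ (1 - δ) := by
          rw [div_lt_iff₀ hc] at h2
          linarith [h2]
        calc K * ((M + 1) / lam T) = K * (M + 1) / lam T := by ring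
          _ < c * lam T ^ (1 - δ) / lam T := by
              rw [div_lt_div_iff_of_pos_right (hlampos T)]; exact hgoal
          _ = c * lam T ^ (-δ) := by rw [hrpow]; ring
      rw [hQhat, if_neg (not_le.2 (lt_of_le_of_lt hb hlt))]
    -- for j = k : survives thresholding, nonzero eventually
    have hbig : ∀ᶠ T in atTop, ∀ ω, ‖Z ω‖ ≤ M →
        dist (lam T • (θhat T ω - θb)) (Z ω) ≤ 1 → Qhat k T ω ≠ 0 := by
      obtain ⟨K, r, hK, hr, hlip⟩ := poly_loc_lip (Q k) θb
      set ρ : ℝ := min r (|eval θb (Q k)| / (2 * K)) with hρ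
      have hρpos : 0 < ρ := lt_min hr (by positivity)
      have E1 : ∀ᶠ T in atTop, (M + 1) / lam T ≤ ρ := hdiv.eventually_le_const hρpos
      have E3 : ∀ᶠ T in atTop, c * lam T ^ (-δ) < |eval θb (Q k)| / 2 :=
        hth0.eventually_lt_const (by positivity)
      filter_upwards [E1, E3] with T h1 h3 ω hZ hd
      have hdθ := hdist T ω hZ hd
      have hθρ : dist (θhat T ω) θb ≤ ρ := hdθ.trans h1
      have hdev : |eval (θhat T ω) (Q k) - eval θb (Q k)| ≤ |eval θb (Q k)| / 2 := by
        calc |eval (θhat T ω) (Q k) - eval θb (Q k)|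
            ≤ K * dist (θhat T ω) θb := hlip _ (hθρ.trans (min_le_left _ _))
          _ ≤ K * (|eval θb (Q k)| / (2 * K)) :=
              mul_le_mul_of_nonneg_left (hθρ.trans (min_le_right _ _)) hK.le
          _ = |eval θb (Q k)| / 2 := by field_simp
      have habs : |eval θb (Q k)| / 2 ≤ |eval (θhat T ω) (Q k)| := by
        have := abs_sub_abs_le_abs_sub (eval θb (Q k)) (eval (θhat T ω) (Q k))
        rw [abs_sub_comm] at this
        linarith [this, hdev]
      have hQk : Qhat k T ω = eval (θhat T ω) (Q k) := by
        rw [hQhat, if_pos (le_trans h3.le habs)]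
      rw [hQk]
      intro h0
      rw [h0, abs_zero] at habs
      have : (0:ℝ) < |eval θb (Q k)| / 2 := by positivity
      linarith
    have hall : ∀ᶠ T in atTop, ∀ j ∈ Finset.range k, ∀ ω, ‖Z ω‖ ≤ M →
        dist (lam T • (θhat T ω - θb)) (Z ω) ≤ 1 → Qhat j T ω = 0 :=
      (Filter.eventually_all_finset _).2 fun j hj => hsmall j (Finset.mem_range.1 hj)
    filter_upwards [hall, hbig] with T hs hb ω hZ hd
    have hQk := hb ω hZ hd
    rw [hkhat, if_pos ⟨k, hkm, hQk⟩]
    have hkmem' : k ∈ {j | j ≤ m ∧ Qhat j T ω ≠ 0} := ⟨hkm, hQk⟩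
    refine le_antisymm (Nat.sInf_le hkmem') ?_
    have hne : {j | j ≤ m ∧ Qhat j T ω ≠ 0}.Nonempty := ⟨k, hkmem'⟩
    have hmem := Nat.sInf_mem hne
    by_contra h
    push_neg at h
    exact hmem.2 (hs _ (Finset.mem_range.2 h) ω hZ hd)
  -- measure-theoretic part
  refine tendsto_order.2 ⟨?_, ?_⟩
  · intro a ha
    obtain ⟨b, hab, hb1⟩ := exists_between ha
    have hU : (⋃ n : ℕ, {ω | ‖Z ω‖ ≤ (n : ℝ)}) = Set.univ := by
      ext ω
      simp only [Set.mem_iUnion, Set.mem_setOf_eq, Set.mem_univ, iff_true]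
      exact exists_nat_ge ‖Z ω‖
    have hsup : (⨆ n : ℕ, μ {ω | ‖Z ω‖ ≤ (n : ℝ)}) = 1 := by
      have hdir : Directed (· ⊆ ·) (fun n : ℕ => {ω | ‖Z ω‖ ≤ (n : ℝ)}) := by
        intro i j
        refine ⟨max i j, fun ω hω => ?_, fun ω hω => ?_⟩
        · show ‖Z ω‖ ≤ ((max i j : ℕ) : ℝ)
          exact le_trans hω (Nat.cast_le.2 (le_max_left i j))
        · show ‖Z ω‖ ≤ ((max i j : ℕ) : ℝ)
          exact le_trans hω (Nat.cast_le.2 (le_max_right i j))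
      rw [← hdir.measure_iUnion, hU, measure_univ]
    obtain ⟨M, hM⟩ : ∃ n : ℕ, b < μ {ω | ‖Z ω‖ ≤ (n : ℝ)} := by
      rw [← lt_iSup_iff, hsup]; exact hb1
    have hD := (hconv 1 one_pos).eventually_lt_const (tsub_pos_of_lt hab)
    filter_upwards [key (M : ℝ), hD] with T hT hDT
    have hsub : {ω | ‖Z ω‖ ≤ (M : ℝ)} ⊆
        {ω | khat T ω = k} ∪ {ω | 1 < dist (lam T • (θhat T ω - θb)) (Z ω)} := by
      intro ω hω
      by_cases hd : dist (lam T • (θhat T ω - θb)) (Z ω) ≤ 1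
      · exact Or.inl (hT ω hω hd)
      · exact Or.inr (not_le.1 hd)
    have hle : μ {ω | ‖Z ω‖ ≤ (M : ℝ)} ≤ μ {ω | khat T ω = k} +
        μ {ω | 1 < dist (lam T • (θhat T ω - θb)) (Z ω)} :=
      (measure_mono hsub).trans (measure_union_le _ _)
    by_contra h
    push_neg at h
    have : μ {ω | ‖Z ω‖ ≤ (M : ℝ)} ≤ a + (b - a) :=
      hle.trans (add_le_add h hDT.le)
    rw [add_tsub_cancel_of_le hab.le] at this
    exact absurd hM (not_lt.2 this)
  · intro a ha
    exact Filter.Eventually.of_forall fun T => lt_of_le_of_lt prob_le_one ha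
end

section
/- (Example 3.2) Let μ be a probability measure on ℝ² that is invariant under every rotation of ℝ² about the origin. Define f : ℝ² → ℝ by f(z) = z₁² z₂² / (z₁² + z₂²) for z ≠ 0 and f(0) = 0, and define h : ℝ² → ℝ by h(z) = z₁²/4. Then the pushforward measures μ ∘ f⁻¹ and μ ∘ h⁻¹ coincide, i.e., f and h have the same distribution under μ. -/
open MeasureTheory Set Real
open scoped ENNReal

instance : Fact (0 < 2 * Real.pi) := ⟨by positivity⟩

lemma key_angle (G : ℝ → ℝ≥0∞) (hG : Measurable G) (a : ℝ) (n : ℤ) (hn : n ≠ 0) :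
    ∫⁻ φ in Set.Ioc 0 (2 * π), G (Real.sin (a - n * φ)) =
      ∫⁻ x : AddCircle (2 * π), G (Real.Angle.sin x) := by
  have hc : Continuous fun x : AddCircle (2 * π) => Real.Angle.sin x := Real.Angle.continuous_sin
  have hF : Measurable fun x : AddCircle (2 * π) => G (Real.Angle.sin x) := hG.comp hc.measurable
  have h1 : ∀ φ : ℝ, G (Real.sin (a - n * φ)) =
      (fun x : AddCircle (2 * π) => G (Real.Angle.sin ((a : AddCircle (2 * π)) - n • x)))
        ((φ : ℝ) : AddCircle (2 * π)) := by
    intro φ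
    have e : ((a : AddCircle (2 * π)) - n • ((φ : ℝ) : AddCircle (2 * π)))
        = ((a - n * φ : ℝ) : AddCircle (2 * π)) := by
      rw [← QuotientAddGroup.mk_zsmul, ← QuotientAddGroup.mk_sub]
      norm_num [zsmul_eq_mul]
    calc G (Real.sin (a - n * φ))
        = G (Real.Angle.sin ((a - n * φ : ℝ) : AddCircle (2 * π))) :=
          (congrArg G (Real.Angle.sin_coe _)).symm
      _ = _ := congrArg G (congrArg Real.Angle.sin e.symm)
  simp_rw [h1]
  have h2 := AddCircle.lintegral_preimage (2 * π) 0
      (fun x : AddCircle (2 * π) => G (Real.Angle.sin ((a : AddCircle (2 * π)) - n • x)))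
  rw [zero_add] at h2
  rw [h2]
  have mp : MeasurePreserving
      (fun x : AddCircle (2 * π) => (a : AddCircle (2 * π)) - n • x) volume volume :=
    (Measure.measurePreserving_sub_left volume _).comp
      (Measure.measurePreserving_zsmul volume hn)
  exact mp.lintegral_comp hF

/-- Example 3.2: if `μ` is a rotation-invariant probability measure on
`ℝ²`, then `f(z) = z₁²z₂²/(z₁²+z₂²)` (with `f(0)=0`) and `h(z) = z₁²/4` have the same
distribution under `μ`. -/
theorem stmt18 (μ : Measure (ℝ × ℝ)) [IsProbabilityMeasure μ]
    (hrot : ∀ φ : ℝ, Measure.map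
      (fun z : ℝ × ℝ =>
        (Real.cos φ * z.1 - Real.sin φ * z.2, Real.sin φ * z.1 + Real.cos φ * z.2)) μ = μ)
    (f h : ℝ × ℝ → ℝ)
    (hf : ∀ z : ℝ × ℝ, f z = if z = 0 then 0 else z.1 ^ 2 * z.2 ^ 2 / (z.1 ^ 2 + z.2 ^ 2))
    (hh : ∀ z : ℝ × ℝ, h z = z.1 ^ 2 / 4) :
    Measure.map f μ = Measure.map h μ := by
  set R : ℝ → ℝ × ℝ → ℝ × ℝ := fun φ z =>
    (Real.cos φ * z.1 - Real.sin φ * z.2, Real.sin φ * z.1 + Real.cos φ * z.2) with hR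
  have hRm : ∀ φ, Measurable (R φ) := by
    intro φ; fun_prop
  have hRm2 : Measurable fun p : ℝ × (ℝ × ℝ) => R p.1 p.2 := by
    simp only [hR]; fun_prop
  have hfm : Measurable f := by
    have : f = fun z : ℝ × ℝ =>
        if z = 0 then 0 else z.1 ^ 2 * z.2 ^ 2 / (z.1 ^ 2 + z.2 ^ 2) := funext hf
    rw [this]
    exact Measurable.ite measurableSet_eq measurable_const (by fun_prop)
  have hhm : Measurable h := by
    have : h = fun z : ℝ × ℝ => z.1 ^ 2 / 4 := funext hh
    rw [this]; fun_prop
  refine Measure.ext fun s hs => ?_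
  rw [Measure.map_apply hfm hs, Measure.map_apply hhm hs]
  -- main averaging identity
  have main : ∀ g : ℝ × ℝ → ℝ, Measurable g →
      ENNReal.ofReal (2 * π) * μ (g ⁻¹' s) =
        ∫⁻ z, (∫⁻ φ in Set.Ioc 0 (2 * π), s.indicator 1 (g (R φ z))) ∂μ := by
    intro g hg
    have step1 : ENNReal.ofReal (2 * π) * μ (g ⁻¹' s) =
        ∫⁻ φ in Set.Ioc 0 (2 * π), μ ((fun z => g (R φ z)) ⁻¹' s) := by
      have : ∀ φ : ℝ, μ ((fun z => g (R φ z)) ⁻¹' s) = μ (g ⁻¹' s) := by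
        intro φ
        conv_rhs => rw [← hrot φ]
        rw [Measure.map_apply (hRm φ) (hg hs)]
        rfl
      simp_rw [this, setLIntegral_const, Real.volume_Ioc, mul_comm]
      norm_num
    rw [step1]
    have step2 : ∀ φ : ℝ, μ ((fun z => g (R φ z)) ⁻¹' s) =
        ∫⁻ z, s.indicator 1 (g (R φ z)) ∂μ := by
      intro φ
      symm
      calc ∫⁻ z, s.indicator 1 (g (R φ z)) ∂μ
          = ∫⁻ z, ((fun z => g (R φ z)) ⁻¹' s).indicator (fun _ => (1 : ℝ≥0∞)) z ∂μ :=
            lintegral_congr fun z => rfl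
        _ = μ ((fun z => g (R φ z)) ⁻¹' s) := lintegral_indicator_one ((hg.comp (hRm φ)) hs)
    simp_rw [step2]
    refine lintegral_lintegral_swap ?_
    exact ((measurable_const.indicator hs).comp (hg.comp hRm2)).aemeasurable
  have hzpt : ∀ z : ℝ × ℝ,
      (∫⁻ φ in Set.Ioc 0 (2 * π), s.indicator 1 (f (R φ z))) =
        ∫⁻ φ in Set.Ioc 0 (2 * π), s.indicator 1 (h (R φ z)) := by
    intro z
    by_cases hz0 : z = 0
    · subst hz0
      have hR0 : ∀ φ, R φ (0 : ℝ × ℝ) = 0 := by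
        intro φ; simp [hR, Prod.ext_iff]
      simp only [hR0, hf, hh]
      norm_num
    · -- polar coordinates
      set w : ℂ := ⟨z.2, z.1⟩ with hw
      have hwne : w ≠ 0 := by
        simp only [hw, Ne, Complex.ext_iff, Complex.zero_re, Complex.zero_im, not_and]
        intro h2 h1
        exact hz0 (Prod.ext h1 h2)
      set r : ℝ := ‖w‖ with hr
      have hrpos : 0 < r := by
        simpa [hr] using norm_pos_iff.mpr hwne
      set θ : ℝ := Complex.arg w with hθ
      have hz1 : z.1 = r * Real.sin θ := by
        rw [hθ, Complex.sin_arg, hr]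
        field_simp [hw]
        rfl
      have hz2 : z.2 = r * Real.cos θ := by
        rw [hθ, Complex.cos_arg hwne, hr]
        field_simp [hw]
        rfl
      have hRz : ∀ φ : ℝ, R φ z = (r * Real.sin (θ - φ), r * Real.cos (θ - φ)) := by
        intro φ
        simp only [hR, hz1, hz2, Real.sin_sub, Real.cos_sub, Prod.ext_iff]
        constructor <;> ring
      have hRne : ∀ φ : ℝ, R φ z ≠ 0 := by
        intro φ hc
        rw [hRz φ, Prod.ext_iff] at hc
        simp only [Prod.fst, Prod.snd] at hc
        have h1 : Real.sin (θ - φ) = 0 := by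
          have := hc.1; simpa [hrpos.ne'] using mul_eq_zero.mp this
        have h2 : Real.cos (θ - φ) = 0 := by
          have := hc.2; simpa [hrpos.ne'] using mul_eq_zero.mp this
        have := Real.sin_sq_add_cos_sq (θ - φ)
        rw [h1, h2] at this; norm_num at this
      have hfR : ∀ φ : ℝ, f (R φ z) = r ^ 2 / 4 * Real.sin (2 * θ - 2 * φ) ^ 2 := by
        intro φ
        rw [hf, if_neg (hRne φ), hRz φ]
        have : (2 : ℝ) * θ - 2 * φ = 2 * (θ - φ) := by ring
        rw [this, Real.sin_two_mul]
        have hs2 : (r * Real.sin (θ - φ)) ^ 2 + (r * Real.cos (θ - φ)) ^ 2 = r ^ 2 := by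
          have := Real.sin_sq_add_cos_sq (θ - φ)
          nlinarith [this]
        simp only [Prod.fst, Prod.snd]
        rw [hs2]
        field_simp
        ring
      have hhR : ∀ φ : ℝ, h (R φ z) = r ^ 2 / 4 * Real.sin (θ - φ) ^ 2 := by
        intro φ
        rw [hh, hRz φ]
        simp only [Prod.fst]
        ring
      set G : ℝ → ℝ≥0∞ := fun t => s.indicator 1 (r ^ 2 / 4 * t ^ 2) with hG
      have hGm : Measurable G :=
        (measurable_const.indicator hs).comp (by fun_prop)
      have e1 : ∀ φ : ℝ, s.indicator (1 : ℝ → ℝ≥0∞) (f (R φ z)) =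
          G (Real.sin (2 * θ - (2 : ℤ) * φ)) := by
        intro φ; rw [hG]; simp only [hfR φ]; norm_num
      have e2 : ∀ φ : ℝ, s.indicator (1 : ℝ → ℝ≥0∞) (h (R φ z)) =
          G (Real.sin (θ - (1 : ℤ) * φ)) := by
        intro φ; rw [hG]; simp only [hhR φ]; norm_num
      calc (∫⁻ φ in Set.Ioc 0 (2 * π), s.indicator 1 (f (R φ z)))
          = ∫⁻ φ in Set.Ioc 0 (2 * π), G (Real.sin (2 * θ - (2 : ℤ) * φ)) := by
            simp_rw [e1]
        _ = ∫⁻ x : AddCircle (2 * π), G (Real.Angle.sin x) := key_angle G hGm (2 * θ) 2 (by norm_num)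
        _ = ∫⁻ φ in Set.Ioc 0 (2 * π), G (Real.sin (θ - (1 : ℤ) * φ)) :=
            (key_angle G hGm θ 1 (by norm_num)).symm
        _ = ∫⁻ φ in Set.Ioc 0 (2 * π), s.indicator 1 (h (R φ z)) := by
            simp_rw [e2]
  have heq : ENNReal.ofReal (2 * π) * μ (f ⁻¹' s) = ENNReal.ofReal (2 * π) * μ (h ⁻¹' s) := by
    rw [main f hfm, main h hhm]
    exact lintegral_congr fun z => hzpt z
  have h2π : ENNReal.ofReal (2 * π) ≠ 0 := by
    rw [Ne, ENNReal.ofReal_eq_zero, not_le]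
    positivity
  exact (ENNReal.mul_right_inj h2π ENNReal.ofReal_ne_top).mp heq
end
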